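/- Let $G$ be a finite group acting by ring automorphisms on a commutative ring $B$, let $C = B^G$ be the ring of invariants, and let $L$ be a field with ring homomorphisms $m_1, m_2 : B \to L$. Suppose that for every $g \in G$ the homomorphisms $m_1 \circ g$ and $m_2$ differ, i.e. there exists $b_g \in B$ with $m_1(g \cdot b_g) \neq m_2(b_g)$. If moreover for each $g$ the element $m_2(b_g) - m_1(g \cdot b_g)$ is invertible in $L$ (automatic since $L$ is a field and the difference is nonzero), then $m_1|_C \neq m_2|_C$. -/

import Mathlib

/-!
If `m₁` and `m₂` agreed on `B^G`, they would agree on every polynomial over `B` with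
`G`-invariant coefficients, evaluated at the same point of `L`. Since each `m₁ ∘ g` differs from
`m₂`, there is a polynomial `f` and a point at which `m₂` evaluates `f` to `0` while every `m₁ ∘ g`
evaluates it to `1`; polynomials play the role of `B ⊗ L` here, where invariants are computed
coefficientwise. The orbit product `∏ g, g • f` has invariant coefficients, yet `m₁` evaluates it
to `1` and `m₂` to `0`.
-/

open MvPolynomial

theorem MvPolynomial.eval₂_eq_eval₂_of_coeff {R S σ : Type*} [CommSemiring R] [CommSemiring S]
    {φ ψ : R →+* S} (v : σ → S) {P : MvPolynomial σ R}
    (h : ∀ d, φ (P.coeff d) = ψ (P.coeff d)) : eval₂ φ v P = eval₂ ψ v P := by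
  simp only [eval₂_eq, h]

theorem exists_mvPolynomial_eval₂_eq_zero_and_eq_one {ι B L : Type*} [Fintype ι] [CommRing B]
    [Field L] (φ : B →+* L) (ψ : ι → B →+* L) (h : ∀ i, ψ i ≠ φ) :
    ∃ (P : MvPolynomial (ι ⊕ ι) B) (v : ι ⊕ ι → L),
      eval₂ φ v P = 0 ∧ ∀ i, eval₂ (ψ i) v P = 1 := by
  choose b hb using fun i => DFunLike.ne_iff.mp (h i)
  set u : ι → L := fun i => (φ (b i) - ψ i (b i))⁻¹
  -- under a hom `ρ`, the `i`-th factor evaluates to `(ρ (b i) - ψ i (b i)) / (φ (b i) - ψ i (b i))`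
  refine ⟨1 - ∏ i, (C (b i) * X (.inl i) - X (.inr i)),
    Sum.elim u fun i => ψ i (b i) * u i, ?_, fun j => ?_⟩
  · have hu : ∀ i, (φ (b i) - ψ i (b i)) * u i = 1 :=
      fun i => mul_inv_cancel₀ (sub_ne_zero.mpr (hb i).symm)
    simp [eval₂_prod, ← sub_mul, hu]
  · have hj : ψ j (b j) * u j - ψ j (b j) * u j = 0 := sub_self _
    simp only [eval₂_sub, eval₂_one, eval₂_prod, eval₂_mul, eval₂_C, eval₂_X, Sum.elim_inl,
      Sum.elim_inr]
    rw [Finset.prod_eq_zero (Finset.mem_univ j) hj, sub_zero]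

section OrbitProd

variable (G : Type*) {B σ : Type*} [Group G] [Fintype G] [CommRing B] [MulSemiringAction G B]

noncomputable def orbitProd (P : MvPolynomial σ B) : MvPolynomial σ B :=
  ∏ g : G, map (MulSemiringAction.toRingHom G B g) P

theorem map_toRingHom_orbitProd (g : G) (P : MvPolynomial σ B) :
    map (MulSemiringAction.toRingHom G B g) (orbitProd G P) = orbitProd G P := by
  have hcomp : ∀ g' : G, (MulSemiringAction.toRingHom G B g).comp
      (MulSemiringAction.toRingHom G B g') = MulSemiringAction.toRingHom G B (g * g') :=
    fun g' => RingHom.ext fun x => (mul_smul g g' x).symm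
  simp only [orbitProd, map_prod, map_map, hcomp]
  exact Fintype.prod_equiv (Equiv.mulLeft g) _ _ fun _ => rfl

theorem smul_coeff_orbitProd (g : G) (P : MvPolynomial σ B) (d : σ →₀ ℕ) :
    g • (orbitProd G P).coeff d = (orbitProd G P).coeff d := by
  conv_rhs => rw [← map_toRingHom_orbitProd G g P]
  exact (coeff_map (MulSemiringAction.toRingHom G B g) _ d).symm

theorem eval₂_orbitProd {L : Type*} [CommSemiring L] (m : B →+* L) (v : σ → L)
    (P : MvPolynomial σ B) :
    eval₂ m v (orbitProd G P) = ∏ g : G, eval₂ (m.comp (MulSemiringAction.toRingHom G B g)) v P := by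
  simp only [orbitProd, eval₂_prod, eval₂_map]

end OrbitProd

/-- If a finite group `G` acts on a commutative ring `B` by ring
automorphisms, and `m₁, m₂ : B → L` are ring homomorphisms to a field such
that `m₁ ∘ g ≠ m₂` for every `g ∈ G`, then `m₁` and `m₂` differ on the ring
of invariants `B^G`. -/
theorem hom_differ_on_invariants {G B L : Type*} [Group G] [Finite G]
    [CommRing B] [MulSemiringAction G B] [Field L] (m₁ m₂ : B →+* L)
    (h : ∀ g : G, ∃ b : B, m₁ (g • b) ≠ m₂ b) :
    ∃ c : B, (∀ g : G, g • c = c) ∧ m₁ c ≠ m₂ c := by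
  cases nonempty_fintype G
  obtain ⟨P, v, hP₂, hP₁⟩ := exists_mvPolynomial_eval₂_eq_zero_and_eq_one m₂
    (fun g => m₁.comp (MulSemiringAction.toRingHom G B g)) fun g => DFunLike.ne_iff.mpr (h g)
  by_contra! hcon
  have heq : eval₂ m₁ v (orbitProd G P) = eval₂ m₂ v (orbitProd G P) :=
    eval₂_eq_eval₂_of_coeff v fun d => hcon _ fun g => smul_coeff_orbitProd G g P d
  have h₁ : eval₂ m₁ v (orbitProd G P) = 1 := by
    rw [eval₂_orbitProd]
    exact Finset.prod_eq_one fun g _ => hP₁ g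
  have h₂ : eval₂ m₂ v (orbitProd G P) = 0 := by
    rw [eval₂_orbitProd]
    have hone : m₂.comp (MulSemiringAction.toRingHom G B 1) = m₂ :=
      RingHom.ext fun b => congrArg m₂ (one_smul G b)
    exact Finset.prod_eq_zero (Finset.mem_univ 1) (by rwa [hone])
  exact one_ne_zero (h₁.symm.trans (heq.trans h₂))
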